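/- arXiv:1412.2456 — 6 statements merged into one kernel-verified Lean document; each statement's English description precedes it below -/
import Mathlib

section
/- Let a, c, ε, t be real numbers with c > 0, ε ≥ 0, c + ε < a and a < t. Then (t − ε)² − c² ≥ min(1/2, c/a) · (t² − (c+ε)²). -/
/-- Let `a, c, ε, t` be real numbers with `c > 0`, `ε ≥ 0`, `c + ε < a` and
`a < t`. Then `(t − ε)² − c² ≥ min (1/2) (c/a) · (t² − (c+ε)²)`. -/
theorem stmt_6 (a c ε t : ℝ) (hc : 0 < c) (hε : 0 ≤ ε) (hca : c + ε < a) (hat : a < t) :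
    min (1 / 2 : ℝ) (c / a) * (t ^ 2 - (c + ε) ^ 2) ≤ (t - ε) ^ 2 - c ^ 2 := by
  have ha : 0 < a := lt_trans (by linarith) hca
  rcases min_cases (1 / 2 : ℝ) (c / a) with ⟨h, hle⟩ | ⟨h, hlt⟩
  · rw [h]
    have hac : a ≤ 2 * c := by
      rw [div_le_div_iff₀ (by norm_num) ha] at hle
      linarith
    nlinarith [sq_nonneg (t - ε - c), sq_nonneg (t - c - ε)]
  · rw [h]
    rw [div_lt_div_iff₀ ha (by norm_num)] at hlt
    have key : c * (t + c + ε) ≤ a * (t + c - ε) := by nlinarith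
    have h1 : c / a * (t ^ 2 - (c + ε) ^ 2) = (c * (t + c + ε)) / a * (t - c - ε) := by
      field_simp; ring
    have h2 : (t - ε) ^ 2 - c ^ 2 = (t + c - ε) * (t - c - ε) := by ring
    rw [h1, h2]
    have ht : 0 ≤ t - c - ε := by linarith
    apply mul_le_mul_of_nonneg_right _ ht
    rw [div_le_iff₀ ha] at *
    nlinarith
end

section
/- Let a, b, c, t be real numbers with 0 < c < b, a < b and b < t². Then ∫_{√b}^{t} ((s² − b)^{−1/2} − (s² − a)^{−1/2}) (s² − c)^{−1/2} ds ≤ (1/(2√b)) · ln(1 + (b−a)/(b−c) + 2 sqrt((b−a)/(b−c))). -/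
open MeasureTheory Set

/-!
For `s > √b` the integrand is nonnegative, hence at most `s / √b` times itself, and this
majorant has the explicit primitive
`G(s) = (log (√(s² - b) + √(s² - c)) - log (√(s² - a) + √(s² - c))) / √b`.
Since `G` is continuous up to `s = √b` and nondecreasing, the majorant is integrable on
`(√b, t)` with integral `G(t) - G(√b)`. Finally `G(t) ≤ 0` because `a < b`, and
`-G(√b) = log (1 + √((b - a) / (b - c))) / √b`, which is the right-hand side.
-/

noncomputable def logSqrtSum (p q x : ℝ) : ℝ :=
  Real.log (√(x ^ 2 - p) + √(x ^ 2 - q))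

noncomputable def invSqrtKernel (a b c s : ℝ) : ℝ :=
  ((√(s ^ 2 - b))⁻¹ - (√(s ^ 2 - a))⁻¹) * (√(s ^ 2 - c))⁻¹

noncomputable def kernelMajorant (a b c s : ℝ) : ℝ :=
  s / √b * invSqrtKernel a b c s

noncomputable def kernelPrimitive (a b c s : ℝ) : ℝ :=
  (logSqrtSum b c s - logSqrtSum a c s) / √b

lemma hasDerivAt_logSqrtSum {p q x : ℝ} (hp : p < x ^ 2) (hq : q < x ^ 2) :
    HasDerivAt (logSqrtSum p q) (x / (√(x ^ 2 - p) * √(x ^ 2 - q))) x := by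
  have hP : 0 < √(x ^ 2 - p) := Real.sqrt_pos.2 (sub_pos.2 hp)
  have hQ : 0 < √(x ^ 2 - q) := Real.sqrt_pos.2 (sub_pos.2 hq)
  have hsqrt : ∀ r, r < x ^ 2 →
      HasDerivAt (fun y : ℝ => √(y ^ 2 - r)) (1 / (2 * √(x ^ 2 - r)) * (2 * x)) x :=
    fun r hr => (Real.hasDerivAt_sqrt (sub_pos.2 hr).ne').comp x
      (by simpa using (hasDerivAt_pow 2 x).sub_const r)
  refine (((hsqrt p hp).add (hsqrt q hq)).log (add_pos hP hQ).ne').congr_deriv ?_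
  simp only [Pi.add_apply]
  field_simp
  ring

lemma continuousAt_logSqrtSum {p q x : ℝ} (hq : q < x ^ 2) :
    ContinuousAt (logSqrtSum p q) x := by
  have hsqrt : ∀ r, Continuous fun y : ℝ => √(y ^ 2 - r) := fun r => by fun_prop
  refine ((hsqrt p).add (hsqrt q)).continuousAt.log ?_
  exact (add_pos_of_nonneg_of_pos (Real.sqrt_nonneg _) (Real.sqrt_pos.2 (sub_pos.2 hq))).ne'

lemma log_one_add_add_two_mul_sqrt {x : ℝ} (hx : 0 ≤ x) :
    Real.log (1 + x + 2 * √x) = 2 * Real.log (1 + √x) := by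
  have hsq : 1 + x + 2 * √x = (1 + √x) ^ 2 := by
    rw [add_sq, Real.sq_sqrt hx]
    ring
  rw [hsq, Real.log_pow]
  norm_num

section Kernel

variable {a b c t x : ℝ}

lemma invSqrtKernel_nonneg (hab : a ≤ b) (hx : b < x ^ 2) : 0 ≤ invSqrtKernel a b c x := by
  have hinv : (√(x ^ 2 - a))⁻¹ ≤ (√(x ^ 2 - b))⁻¹ :=
    inv_anti₀ (Real.sqrt_pos.2 (sub_pos.2 hx)) (Real.sqrt_le_sqrt (by linarith))
  exact mul_nonneg (sub_nonneg.2 hinv) (by positivity)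

lemma kernelMajorant_nonneg (hab : a ≤ b) (hx : √b < x) : 0 ≤ kernelMajorant a b c x :=
  mul_nonneg (div_nonneg ((Real.sqrt_nonneg b).trans hx.le) (Real.sqrt_nonneg b))
    (invSqrtKernel_nonneg hab (Real.lt_sq_of_sqrt_lt hx))

lemma invSqrtKernel_le_kernelMajorant (hb : 0 < b) (hab : a ≤ b) (hx : √b < x) :
    invSqrtKernel a b c x ≤ kernelMajorant a b c x :=
  le_mul_of_one_le_left (invSqrtKernel_nonneg hab (Real.lt_sq_of_sqrt_lt hx))
    ((one_le_div (Real.sqrt_pos.2 hb)).2 hx.le)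

lemma hasDerivAt_kernelPrimitive (ha : a < x ^ 2) (hb : b < x ^ 2) (hc : c < x ^ 2) :
    HasDerivAt (kernelPrimitive a b c) (kernelMajorant a b c x) x := by
  refine (((hasDerivAt_logSqrtSum hb hc).sub (hasDerivAt_logSqrtSum ha hc)).div_const √b
    ).congr_deriv ?_
  simp only [kernelMajorant, invSqrtKernel]
  ring

lemma hasDerivAt_kernelPrimitive_of_sqrt_lt (hcb : c < b) (hab : a ≤ b) (hx : √b < x) :
    HasDerivAt (kernelPrimitive a b c) (kernelMajorant a b c x) x := by
  have hb : b < x ^ 2 := Real.lt_sq_of_sqrt_lt hx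
  exact hasDerivAt_kernelPrimitive (hab.trans_lt hb) hb (hcb.trans hb)

lemma continuousOn_kernelPrimitive (hcb : c < b) :
    ContinuousOn (kernelPrimitive a b c) (Ici √b) := fun x hx => by
  have hc : c < x ^ 2 := hcb.trans_le (Real.sqrt_le_iff.1 hx).2
  exact ((continuousAt_logSqrtSum hc).sub (continuousAt_logSqrtSum hc)).div_const _
    |>.continuousWithinAt

lemma integrableOn_kernelMajorant (hcb : c < b) (hab : a ≤ b) :
    IntegrableOn (kernelMajorant a b c) (Ioc √b t) :=
  intervalIntegral.integrableOn_deriv_of_nonneg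
    ((continuousOn_kernelPrimitive hcb).mono Icc_subset_Ici_self)
    (fun _ hx => hasDerivAt_kernelPrimitive_of_sqrt_lt hcb hab hx.1)
    (fun _ hx => kernelMajorant_nonneg hab hx.1)

lemma integral_kernelMajorant (hcb : c < b) (hab : a ≤ b) (ht : √b ≤ t) :
    ∫ x in Ioo √b t, kernelMajorant a b c x =
      kernelPrimitive a b c t - kernelPrimitive a b c √b := by
  rw [← integral_Ioc_eq_integral_Ioo, ← intervalIntegral.integral_of_le ht]
  exact intervalIntegral.integral_eq_sub_of_hasDerivAt_of_le ht
    ((continuousOn_kernelPrimitive hcb).mono Icc_subset_Ici_self)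
    (fun _ hx => hasDerivAt_kernelPrimitive_of_sqrt_lt hcb hab hx.1)
    ((intervalIntegrable_iff_integrableOn_Ioc_of_le ht).2 (integrableOn_kernelMajorant hcb hab))

lemma kernelPrimitive_nonpos (hab : a ≤ b) (hc : c < t ^ 2) : kernelPrimitive a b c t ≤ 0 := by
  refine div_nonpos_of_nonpos_of_nonneg (sub_nonpos.2 ?_) (Real.sqrt_nonneg b)
  refine Real.log_le_log ?_ (by gcongr)
  exact add_pos_of_nonneg_of_pos (Real.sqrt_nonneg _) (Real.sqrt_pos.2 (sub_pos.2 hc))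

lemma neg_kernelPrimitive_sqrt (hb : 0 ≤ b) (hcb : c < b) (hab : a ≤ b) :
    -kernelPrimitive a b c √b =
      1 / (2 * √b) * Real.log (1 + (b - a) / (b - c) + 2 * √((b - a) / (b - c))) := by
  have hC : 0 < √(b - c) := Real.sqrt_pos.2 (sub_pos.2 hcb)
  have hsum : 1 + √((b - a) / (b - c)) = (√(b - a) + √(b - c)) / √(b - c) := by
    rw [Real.sqrt_div (sub_nonneg.2 hab)]
    field_simp
    ring
  rw [log_one_add_add_two_mul_sqrt (div_nonneg (sub_nonneg.2 hab) (sub_nonneg.2 hcb.le)), hsum,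
    Real.log_div (by positivity) hC.ne']
  simp only [kernelPrimitive, logSqrtSum, Real.sq_sqrt hb, sub_self, Real.sqrt_zero, zero_add]
  ring

end Kernel

theorem stmt_7_general (a b c t : ℝ) (hc : 0 < c) (hcb : c < b) (hab : a < b) :
    (∫⁻ s in Ioo (Real.sqrt b) t,
        ENNReal.ofReal (((Real.sqrt (s ^ 2 - b))⁻¹ - (Real.sqrt (s ^ 2 - a))⁻¹) *
          (Real.sqrt (s ^ 2 - c))⁻¹)) ≤
      ENNReal.ofReal (1 / (2 * Real.sqrt b) *
        Real.log (1 + (b - a) / (b - c) + 2 * Real.sqrt ((b - a) / (b - c)))) := by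
  rcases le_or_gt t √b with ht | ht
  · simp [Ioo_eq_empty (not_lt.2 ht)]
  have hb : 0 < b := hc.trans hcb
  calc _ ≤ ∫⁻ s in Ioo √b t, ENNReal.ofReal (kernelMajorant a b c s) :=
        setLIntegral_mono' measurableSet_Ioo fun s hs =>
          ENNReal.ofReal_le_ofReal (invSqrtKernel_le_kernelMajorant hb hab.le hs.1)
    _ = ENNReal.ofReal (kernelPrimitive a b c t - kernelPrimitive a b c √b) := by
        rw [← integral_kernelMajorant hcb hab.le ht.le, ofReal_integral_eq_lintegral_ofReal
          ((integrableOn_kernelMajorant hcb hab.le).mono_set Ioo_subset_Ioc_self)]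
        filter_upwards [ae_restrict_mem measurableSet_Ioo] with s hs
        exact kernelMajorant_nonneg hab.le hs.1
    _ ≤ _ := by
        refine ENNReal.ofReal_le_ofReal ?_
        rw [← neg_kernelPrimitive_sqrt hb.le hcb hab.le]
        linarith [kernelPrimitive_nonpos (c := c) hab.le (hcb.trans (Real.lt_sq_of_sqrt_lt ht))]

/-- Let `a, b, c, t` be real numbers with `0 < c < b`, `a < b` and `b < t²`. Then
`∫_{√b}^{t} ((s² − b)^{−1/2} − (s² − a)^{−1/2}) (s² − c)^{−1/2} ds
  ≤ (1/(2√b)) ln(1 + (b−a)/(b−c) + 2 √((b−a)/(b−c)))`,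
the integral being a Lebesgue integral of a nonnegative function valued in `[0,∞]`. -/
theorem stmt_7 (a b c t : ℝ) (hc : 0 < c) (hcb : c < b) (hab : a < b) (hbt : b < t ^ 2) :
    (∫⁻ s in Ioo (Real.sqrt b) t,
        ENNReal.ofReal (((Real.sqrt (s ^ 2 - b))⁻¹ - (Real.sqrt (s ^ 2 - a))⁻¹) *
          (Real.sqrt (s ^ 2 - c))⁻¹)) ≤
      ENNReal.ofReal (1 / (2 * Real.sqrt b) *
        Real.log (1 + (b - a) / (b - c) + 2 * Real.sqrt ((b - a) / (b - c)))) :=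
  stmt_7_general a b c t hc hcb hab
end

section
/- Let a, b, c, T be real numbers with 0 < c < b, a < b and b < T. Then ∫_{b}^{T} ((σ − b)^{−1/2} − (σ − a)^{−1/2}) (σ − c)^{−1/2} dσ = ln( (√(T−b) + √(T−c))² (√(b−a) + √(b−c))² / ((√(T−a) + √(T−c))² (b−c)) ). -/
open MeasureTheory Set Real

/- The integrand is the derivative of
`F σ = ln((√(σ-b) + √(σ-c))²) - ln((√(σ-a) + √(σ-c))²)`, which is continuous up to `σ = b`;
since the integrand is nonnegative it is automatically integrable, and the integral is
`F T - F b`. -/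

theorem MeasureTheory.lintegral_Ioo_ofReal_eq_sub_of_hasDerivAt {F f : ℝ → ℝ} {a b : ℝ}
    (hab : a ≤ b) (hcont : ContinuousOn F (Icc a b))
    (hderiv : ∀ x ∈ Ioo a b, HasDerivAt F (f x) x) (hf : ∀ x ∈ Ioo a b, 0 ≤ f x) :
    ∫⁻ x in Ioo a b, ENNReal.ofReal (f x) = ENNReal.ofReal (F b - F a) := by
  have hint : IntegrableOn f (Ioc a b) :=
    intervalIntegral.integrableOn_deriv_of_nonneg hcont hderiv hf
  have hftc : ∫ x in Ioo a b, f x = F b - F a := by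
    rw [← integral_Ioc_eq_integral_Ioo, ← intervalIntegral.integral_of_le hab]
    exact intervalIntegral.integral_eq_sub_of_hasDerivAt_of_le hab hcont hderiv
      ((intervalIntegrable_iff_integrableOn_Ioc_of_le hab).2 hint)
  rw [← hftc, ofReal_integral_eq_lintegral_ofReal (hint.mono_set Ioo_subset_Ioc_self)
    ((ae_restrict_iff' measurableSet_Ioo).2 (Filter.Eventually.of_forall hf))]

namespace Real

theorem hasDerivAt_log_sq_sqrt_sub_add_sqrt_sub {p q σ : ℝ} (hp : p < σ) (hq : q < σ) :
    HasDerivAt (fun σ => log ((√(σ - p) + √(σ - q)) ^ 2)) ((√(σ - p))⁻¹ * (√(σ - q))⁻¹) σ := by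
  have hsp : 0 < √(σ - p) := sqrt_pos.2 (sub_pos.2 hp)
  have hsq : 0 < √(σ - q) := sqrt_pos.2 (sub_pos.2 hq)
  have hsqrt : ∀ r, r < σ → HasDerivAt (fun σ => √(σ - r)) (1 / (2 * √(σ - r))) σ := by
    intro r hr
    simpa [Function.comp_def] using
      (hasDerivAt_sqrt (sub_pos.2 hr).ne').comp σ ((hasDerivAt_id σ).sub_const r)
  convert (((hsqrt p hp).add (hsqrt q hq)).pow 2).log (pow_pos (add_pos hsp hsq) 2).ne' using 1
  · rfl
  simp only [Pi.add_apply, Pi.pow_apply]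
  field_simp
  ring

theorem continuousOn_log_sq_sqrt_sub_add_sqrt_sub {p q b : ℝ} (hq : q < b) :
    ContinuousOn (fun σ => log ((√(σ - p) + √(σ - q)) ^ 2)) (Ici b) := by
  refine ContinuousOn.log (by fun_prop) fun σ hσ => ?_
  have : 0 < √(σ - q) := sqrt_pos.2 (by linarith [mem_Ici.1 hσ])
  positivity

end Real

theorem stmt_8_general (a b c T : ℝ) (hcb : c < b) (hab : a < b) (hbT : b < T) :
    (∫⁻ σ in Ioo b T,
        ENNReal.ofReal (((Real.sqrt (σ - b))⁻¹ - (Real.sqrt (σ - a))⁻¹) *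
          (Real.sqrt (σ - c))⁻¹)) =
      ENNReal.ofReal (Real.log
        ((Real.sqrt (T - b) + Real.sqrt (T - c)) ^ 2 *
            (Real.sqrt (b - a) + Real.sqrt (b - c)) ^ 2 /
          ((Real.sqrt (T - a) + Real.sqrt (T - c)) ^ 2 * (b - c)))) := by
  set G : ℝ → ℝ → ℝ := fun p σ => log ((√(σ - p) + √(σ - c)) ^ 2)
  have hcont : ContinuousOn (fun σ => G b σ - G a σ) (Icc b T) :=
    ((continuousOn_log_sq_sqrt_sub_add_sqrt_sub hcb).sub
      (continuousOn_log_sq_sqrt_sub_add_sqrt_sub hcb)).mono Icc_subset_Ici_self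
  have hderiv : ∀ σ ∈ Ioo b T, HasDerivAt (fun σ => G b σ - G a σ)
      (((√(σ - b))⁻¹ - (√(σ - a))⁻¹) * (√(σ - c))⁻¹) σ := fun σ ⟨hbσ, _⟩ =>
    ((hasDerivAt_log_sq_sqrt_sub_add_sqrt_sub hbσ (hcb.trans hbσ)).sub
      (hasDerivAt_log_sq_sqrt_sub_add_sqrt_sub (hab.trans hbσ) (hcb.trans hbσ))).congr_deriv
      (sub_mul _ _ _).symm
  have hnonneg : ∀ σ ∈ Ioo b T, 0 ≤ ((√(σ - b))⁻¹ - (√(σ - a))⁻¹) * (√(σ - c))⁻¹ :=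
    fun σ hσ => mul_nonneg (sub_nonneg.2 (inv_anti₀ (sqrt_pos.2 (sub_pos.2 hσ.1))
      (sqrt_le_sqrt (by linarith)))) (by positivity)
  rw [MeasureTheory.lintegral_Ioo_ofReal_eq_sub_of_hasDerivAt hbT.le hcont hderiv hnonneg]
  congr 1
  have hbc : 0 < b - c := sub_pos.2 hcb
  have hG_bb : G b b = log (b - c) := by simp only [G, sub_self, sqrt_zero, zero_add, sq_sqrt hbc.le]
  have hsqrt_Tc : 0 < √(T - c) := sqrt_pos.2 (by linarith)
  have hsqrt_bc : 0 < √(b - c) := sqrt_pos.2 hbc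
  rw [hG_bb]
  simp only [G]
  rw [log_div (by positivity) (by positivity), log_mul (by positivity) (by positivity),
    log_mul (by positivity) hbc.ne']
  ring

/-- Let `a, b, c, T` be real numbers with `0 < c < b`, `a < b` and `b < T`. Then
`∫_{b}^{T} ((σ − b)^{−1/2} − (σ − a)^{−1/2}) (σ − c)^{−1/2} dσ
  = ln((√(T−b)+√(T−c))² (√(b−a)+√(b−c))² / ((√(T−a)+√(T−c))² (b−c)))`,
the integral being a Lebesgue integral of a nonnegative function valued in `[0,∞]`. -/
theorem stmt_8 (a b c T : ℝ) (hc : 0 < c) (hcb : c < b) (hab : a < b) (hbT : b < T) :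
    (∫⁻ σ in Ioo b T,
        ENNReal.ofReal (((Real.sqrt (σ - b))⁻¹ - (Real.sqrt (σ - a))⁻¹) *
          (Real.sqrt (σ - c))⁻¹)) =
      ENNReal.ofReal (Real.log
        ((Real.sqrt (T - b) + Real.sqrt (T - c)) ^ 2 *
            (Real.sqrt (b - a) + Real.sqrt (b - c)) ^ 2 /
          ((Real.sqrt (T - a) + Real.sqrt (T - c)) ^ 2 * (b - c)))) :=
  stmt_8_general a b c T hcb hab hbT
end

section
/- Let b, c, T be real numbers with 0 ≤ c < b < T. Then ∫_{b}^{T} (s² − b²)^{−1/2} (s² − c²)^{−1/2} ds ≤ (1/(2b)) · ln( (sqrt(T² − b²) + sqrt(T² − c²))² / (b² − c²) ). -/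
open MeasureTheory Set

/-!
Since `s ≥ b` on the domain, the integrand is at most `(s / b) / (√(s² - b²) √(s² - c²))`,
which is the derivative of `b⁻¹ log (√(s² - b²) + √(s² - c²))`. This antiderivative is
continuous up to `s = b`, so the fundamental theorem of calculus evaluates the integral of the
majorant exactly, and the difference of its values at `T` and `b` is the right-hand side.
-/

theorem lintegral_Ioo_ofReal_deriv_of_nonneg {F F' : ℝ → ℝ} {a b : ℝ} (hab : a ≤ b)
    (hcont : ContinuousOn F (Icc a b)) (hderiv : ∀ x ∈ Ioo a b, HasDerivAt F (F' x) x)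
    (hnonneg : ∀ x ∈ Ioo a b, 0 ≤ F' x) :
    ∫⁻ x in Ioo a b, ENNReal.ofReal (F' x) = ENNReal.ofReal (F b - F a) := by
  have hint : IntegrableOn F' (Ioc a b) :=
    intervalIntegral.integrableOn_deriv_of_nonneg hcont hderiv hnonneg
  rw [← ofReal_integral_eq_lintegral_ofReal (hint.mono_set Ioo_subset_Ioc_self)
      ((ae_restrict_mem measurableSet_Ioo).mono hnonneg),
    ← integral_Ioc_eq_integral_Ioo, ← intervalIntegral.integral_of_le hab,
    intervalIntegral.integral_eq_sub_of_hasDerivAt_of_le hab hcont hderiv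
      ((intervalIntegrable_iff_integrableOn_Ioc_of_le hab).2 hint)]

theorem hasDerivAt_log_sqrt_sq_sub_add_sqrt_sq_sub {b c x : ℝ} (hb : b ^ 2 < x ^ 2)
    (hc : c ^ 2 < x ^ 2) :
    HasDerivAt (fun s => Real.log (√(s ^ 2 - b ^ 2) + √(s ^ 2 - c ^ 2)))
      (x / (√(x ^ 2 - b ^ 2) * √(x ^ 2 - c ^ 2))) x := by
  have hu : 0 < √(x ^ 2 - b ^ 2) := Real.sqrt_pos.2 (sub_pos.2 hb)
  have hv : 0 < √(x ^ 2 - c ^ 2) := Real.sqrt_pos.2 (sub_pos.2 hc)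
  have hsqrt {a : ℝ} (ha : a ^ 2 < x ^ 2) :
      HasDerivAt (fun s => √(s ^ 2 - a ^ 2)) (2 * x / (2 * √(x ^ 2 - a ^ 2))) x :=
    (((hasDerivAt_pow 2 x).sub_const (a ^ 2)).sqrt (sub_pos.2 ha).ne').congr_deriv (by ring)
  have hsum : HasDerivAt (fun s => √(s ^ 2 - b ^ 2) + √(s ^ 2 - c ^ 2))
      (2 * x / (2 * √(x ^ 2 - b ^ 2)) + 2 * x / (2 * √(x ^ 2 - c ^ 2))) x :=
    (hsqrt hb).add (hsqrt hc)
  convert hsum.log (by positivity) using 1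
  field_simp
  ring

theorem log_sqrt_sq_sub_add_sqrt_sq_sub_sub {b c T : ℝ} (hcb : c ^ 2 < b ^ 2)
    (hbT : b ^ 2 ≤ T ^ 2) :
    Real.log (√(T ^ 2 - b ^ 2) + √(T ^ 2 - c ^ 2)) -
        Real.log (√(b ^ 2 - b ^ 2) + √(b ^ 2 - c ^ 2)) =
      Real.log ((√(T ^ 2 - b ^ 2) + √(T ^ 2 - c ^ 2)) ^ 2 / (b ^ 2 - c ^ 2)) / 2 := by
  have hY : 0 < b ^ 2 - c ^ 2 := sub_pos.2 hcb
  have hX : 0 < √(T ^ 2 - b ^ 2) + √(T ^ 2 - c ^ 2) := by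
    have : 0 < √(T ^ 2 - c ^ 2) := Real.sqrt_pos.2 (by linarith)
    positivity
  rw [sub_self, Real.sqrt_zero, zero_add, Real.log_sqrt hY.le,
    Real.log_div (by positivity) hY.ne', Real.log_pow]
  push_cast
  ring

theorem continuousOn_log_sqrt_sq_sub_add_sqrt_sq_sub {b c : ℝ} (hb : 0 ≤ b)
    (hcb : c ^ 2 < b ^ 2) :
    ContinuousOn (fun s => Real.log (√(s ^ 2 - b ^ 2) + √(s ^ 2 - c ^ 2))) (Ici b) := by
  refine (by fun_prop : Continuous fun s : ℝ =>
    √(s ^ 2 - b ^ 2) + √(s ^ 2 - c ^ 2)).continuousOn.log fun s (hs : b ≤ s) => ?_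
  have : 0 < √(s ^ 2 - c ^ 2) := Real.sqrt_pos.2 (by nlinarith)
  positivity

theorem inv_sqrt_sq_sub_mul_inv_sqrt_sq_sub_le {b c s : ℝ} (hb : 0 < b) (hbs : b ≤ s) :
    (√(s ^ 2 - b ^ 2))⁻¹ * (√(s ^ 2 - c ^ 2))⁻¹ ≤
      b⁻¹ * (s / (√(s ^ 2 - b ^ 2) * √(s ^ 2 - c ^ 2))) := by
  have h1 : 1 ≤ b⁻¹ * s := by rwa [← div_eq_inv_mul, one_le_div hb]
  calc (√(s ^ 2 - b ^ 2))⁻¹ * (√(s ^ 2 - c ^ 2))⁻¹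
      ≤ b⁻¹ * s * ((√(s ^ 2 - b ^ 2))⁻¹ * (√(s ^ 2 - c ^ 2))⁻¹) :=
        le_mul_of_one_le_left (by positivity) h1
    _ = b⁻¹ * (s / (√(s ^ 2 - b ^ 2) * √(s ^ 2 - c ^ 2))) := by field_simp

/-- Let `b, c, T` be real numbers with `0 ≤ c < b < T`. Then
`∫_{b}^{T} (s² − b²)^{−1/2} (s² − c²)^{−1/2} ds
  ≤ (1/(2b)) ln((√(T² − b²) + √(T² − c²))² / (b² − c²))`. -/
theorem stmt_9 (b c T : ℝ) (hc : 0 ≤ c) (hcb : c < b) (hbT : b < T) :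
    (∫⁻ s in Ioo b T,
        ENNReal.ofReal ((Real.sqrt (s ^ 2 - b ^ 2))⁻¹ * (Real.sqrt (s ^ 2 - c ^ 2))⁻¹)) ≤
      ENNReal.ofReal (1 / (2 * b) *
        Real.log ((Real.sqrt (T ^ 2 - b ^ 2) + Real.sqrt (T ^ 2 - c ^ 2)) ^ 2 /
          (b ^ 2 - c ^ 2))) := by
  have hb : 0 < b := hc.trans_lt hcb
  have hcb2 : c ^ 2 < b ^ 2 := by nlinarith
  set F : ℝ → ℝ := fun s => b⁻¹ * Real.log (√(s ^ 2 - b ^ 2) + √(s ^ 2 - c ^ 2))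
  set F' : ℝ → ℝ := fun s => b⁻¹ * (s / (√(s ^ 2 - b ^ 2) * √(s ^ 2 - c ^ 2)))
  have hcont : ContinuousOn F (Icc b T) := continuousOn_const.mul
    ((continuousOn_log_sqrt_sq_sub_add_sqrt_sq_sub hb.le hcb2).mono Icc_subset_Ici_self)
  have hderiv (s : ℝ) (hs : s ∈ Ioo b T) : HasDerivAt F (F' s) s :=
    (hasDerivAt_log_sqrt_sq_sub_add_sqrt_sq_sub (by nlinarith [hs.1])
      (by nlinarith [hs.1])).const_mul _
  have hle (s : ℝ) (hs : s ∈ Ioo b T) :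
      (√(s ^ 2 - b ^ 2))⁻¹ * (√(s ^ 2 - c ^ 2))⁻¹ ≤ F' s :=
    inv_sqrt_sq_sub_mul_inv_sqrt_sq_sub_le hb hs.1.le
  calc _ ≤ ∫⁻ s in Ioo b T, ENNReal.ofReal (F' s) :=
        setLIntegral_mono' measurableSet_Ioo fun s hs => ENNReal.ofReal_le_ofReal (hle s hs)
    _ = ENNReal.ofReal (F T - F b) :=
        lintegral_Ioo_ofReal_deriv_of_nonneg hbT.le hcont hderiv
          fun s hs => (by positivity : (0 : ℝ) ≤ _).trans (hle s hs)
    _ = _ := by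
      simp only [F]
      rw [← mul_sub, log_sqrt_sq_sub_add_sqrt_sq_sub_sub hcb2 (by nlinarith)]
      ring_nf
end

section
/- Let b, c, T be real numbers with 0 ≤ c < b < T. Then ∫_{b}^{T} (s² − b²)^{−1/2} (s² − c²)^{−1/2} ds ≥ (1/(2T)) · ln( (sqrt(T² − b²) + sqrt(T² − c²))² / (b² − c²) ). -/
open MeasureTheory Set Filter

/-!
The function `F s = log (√(s² - b²) + √(s² - c²))` has derivative `s / (√(s² - b²) √(s² - c²))`,
so on `(b, T)` the integrand dominates `F' s / T`. Since `F` is continuous up to `s = b` and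
`F' ≥ 0`, the fundamental theorem of calculus applies despite the singularity and gives the bound
`(F T - F b) / T`, which is the left-hand side because `F b = ½ log (b² - c²)`.
-/

theorem lintegral_Ioo_ofReal_deriv_eq_of_nonneg {g g' : ℝ → ℝ} {a b : ℝ} (hab : a ≤ b)
    (hcont : ContinuousOn g (Icc a b)) (hderiv : ∀ x ∈ Ioo a b, HasDerivAt g (g' x) x)
    (hpos : ∀ x ∈ Ioo a b, 0 ≤ g' x) :
    ∫⁻ x in Ioo a b, ENNReal.ofReal (g' x) = ENNReal.ofReal (g b - g a) := by
  have hint : IntegrableOn g' (Ioc a b) :=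
    intervalIntegral.integrableOn_deriv_of_nonneg hcont hderiv hpos
  rw [← ofReal_integral_eq_lintegral_ofReal (hint.mono_set Ioo_subset_Ioc_self)
    ((ae_restrict_iff' measurableSet_Ioo).mpr (Eventually.of_forall hpos)),
    ← integral_Ioc_eq_integral_Ioo, ← intervalIntegral.integral_of_le hab,
    intervalIntegral.integral_eq_sub_of_hasDerivAt_of_le hab hcont hderiv
      (intervalIntegrable_iff_integrableOn_Ioc_of_le hab |>.mpr hint)]

theorem hasDerivAt_sqrt_sq_sub {p s : ℝ} (hs : p < s ^ 2) :
    HasDerivAt (fun x : ℝ => √(x ^ 2 - p)) (s / √(s ^ 2 - p)) s := by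
  have hpos : 0 < √(s ^ 2 - p) := Real.sqrt_pos.mpr (sub_pos.mpr hs)
  convert ((hasDerivAt_pow 2 s).sub_const p).sqrt (sub_pos.mpr hs).ne' using 1
  field_simp
  ring

noncomputable def logSumSqrt (b c s : ℝ) : ℝ :=
  Real.log (√(s ^ 2 - b ^ 2) + √(s ^ 2 - c ^ 2))

theorem hasDerivAt_logSumSqrt {b c s : ℝ} (hb : b ^ 2 < s ^ 2) (hc : c ^ 2 < s ^ 2) :
    HasDerivAt (logSumSqrt b c) (s * ((√(s ^ 2 - b ^ 2))⁻¹ * (√(s ^ 2 - c ^ 2))⁻¹)) s := by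
  have hu : 0 < √(s ^ 2 - b ^ 2) := Real.sqrt_pos.mpr (sub_pos.mpr hb)
  have hv : 0 < √(s ^ 2 - c ^ 2) := Real.sqrt_pos.mpr (sub_pos.mpr hc)
  have hsum : √(s ^ 2 - b ^ 2) + √(s ^ 2 - c ^ 2) ≠ 0 := by positivity
  convert ((hasDerivAt_sqrt_sq_sub hb).add (hasDerivAt_sqrt_sq_sub hc)).log hsum using 1
  · rfl
  simp only [Pi.add_apply]
  field_simp
  ring

theorem continuousOn_logSumSqrt {b c : ℝ} {S : Set ℝ} (hS : ∀ s ∈ S, c ^ 2 < s ^ 2) :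
    ContinuousOn (logSumSqrt b c) S := by
  refine ContinuousOn.log (by fun_prop) fun s hs => ?_
  have := Real.sqrt_pos.mpr (sub_pos.mpr (hS s hs))
  positivity

theorem logSumSqrt_self {b c : ℝ} (h : c ^ 2 ≤ b ^ 2) :
    logSumSqrt b c b = Real.log (b ^ 2 - c ^ 2) / 2 := by
  rw [logSumSqrt, sub_self, Real.sqrt_zero, zero_add, Real.log_sqrt (sub_nonneg.mpr h)]

/-- Let `b, c, T` be real numbers with `0 ≤ c < b < T`. Then
`∫_{b}^{T} (s² − b²)^{−1/2} (s² − c²)^{−1/2} ds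
  ≥ (1/(2T)) ln((√(T² − b²) + √(T² − c²))² / (b² − c²))`. -/
theorem stmt_10 (b c T : ℝ) (hc : 0 ≤ c) (hcb : c < b) (hbT : b < T) :
    ENNReal.ofReal (1 / (2 * T) *
        Real.log ((Real.sqrt (T ^ 2 - b ^ 2) + Real.sqrt (T ^ 2 - c ^ 2)) ^ 2 /
          (b ^ 2 - c ^ 2))) ≤
      ∫⁻ s in Ioo b T,
        ENNReal.ofReal ((Real.sqrt (s ^ 2 - b ^ 2))⁻¹ * (Real.sqrt (s ^ 2 - c ^ 2))⁻¹) := by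
  have hb : 0 < b := hc.trans_lt hcb
  have hT : 0 < T := hb.trans hbT
  have hcs : ∀ s ∈ Icc b T, c ^ 2 < s ^ 2 := fun s hs => by nlinarith [hs.1]
  have hbs : ∀ s ∈ Ioo b T, b ^ 2 < s ^ 2 := fun s hs => by nlinarith [hs.1]
  set f : ℝ → ℝ := fun s => (√(s ^ 2 - b ^ 2))⁻¹ * (√(s ^ 2 - c ^ 2))⁻¹
  have hf : ∀ s, 0 ≤ f s := fun s => by positivity
  have hFTC := lintegral_Ioo_ofReal_deriv_eq_of_nonneg (g := fun s => logSumSqrt b c s / T)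
    (g' := fun s => s * f s / T) hbT.le ((continuousOn_logSumSqrt hcs).div_const T)
    (fun s hs => (hasDerivAt_logSumSqrt (hbs s hs) (hcs s (Ioo_subset_Icc_self hs))).div_const T)
    (fun s hs => by have := hb.trans hs.1; positivity)
  have hX : 0 < √(T ^ 2 - b ^ 2) + √(T ^ 2 - c ^ 2) := by
    have := Real.sqrt_pos.mpr (sub_pos.mpr (hcs T (right_mem_Icc.mpr hbT.le)))
    positivity
  calc _ = ENNReal.ofReal (logSumSqrt b c T / T - logSumSqrt b c b / T) := by
        rw [logSumSqrt_self (by nlinarith), logSumSqrt,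
          Real.log_div (pow_pos hX 2).ne' (by nlinarith), Real.log_pow]
        congr 1
        field_simp
        ring
    _ = ∫⁻ s in Ioo b T, ENNReal.ofReal (s * f s / T) := hFTC.symm
    _ ≤ ∫⁻ s in Ioo b T, ENNReal.ofReal (f s) := by
        refine setLIntegral_mono' measurableSet_Ioo fun s hs => ENNReal.ofReal_le_ofReal ?_
        rw [mul_div_right_comm]
        exact mul_le_of_le_one_left (hf s) (div_le_one_of_le₀ hs.2.le hT.le)
end

section
/- Let 0 ≤ m < 1, t₀ > 0 and K > 0 be fixed, and let f : (0,∞) → (0,∞) be continuous with ∫₀¹ r ln(1/r) f(r) dr < ∞. Define, for h > 0, B(h) = ∫₀^{2 sqrt((1+m)/(1−m)) t₀} ∫_{r sqrt(1−m²)}^{2(1+m)t₀} ∫₀^{π/2} 1_{η(θ) ≤ w/((1−m²) r)} · r f(r) ln(1 + K h^{1/2} / (w r η(θ)/(1−m²) − r² η(θ)²)) (ln(4(1+m)t₀) − ln w) dθ dw dr. Then B(h) → 0 as h → 0⁺. -/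
/-!
As `h ↓ 0` the integrand of `B(h)` decreases pointwise to `0`, so after writing `B(h)` as a single
integral over `ℝ³`, dominated convergence reduces the claim to `B(1) < ∞`.

For `B(1)`, put `c = 1 - m²`, `R = 2 √((1+m)/(1-m)) t₀` and `v = w - c r η(θ) ≥ 0` on the support
of the indicator. The denominator equals `r η v / c ≥ r v`, hence
`log (1 + K / (r v)) ≤ log ((R + K) / r) + 2 v^{-1/2}`, while `log (4(1+m)t₀) - log w ≤ A - log r`
because `w > r √c`. The singularity `v^{-1/2}` is integrable in `w`, uniformly in `θ`, so the
inner integrals of `B(1)` are at most a constant times `r f(r) (A - log r)`. That is integrable on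
`(0, R)`: near `0` by `∫₀¹ r log(1/r) f(r) dr < ∞`, and elsewhere by continuity of `f`.
-/

open MeasureTheory Set Filter

/-- `η(θ) = sqrt(cos²θ/(1−m²)² + sin²θ/(1−m²))`. -/
noncomputable def eta (m θ : ℝ) : ℝ :=
  Real.sqrt (Real.cos θ ^ 2 / (1 - m ^ 2) ^ 2 + Real.sin θ ^ 2 / (1 - m ^ 2))

/-- The modulus-of-continuity bound of Lemma 5 of the paper:
`B(h) = ∫₀^{2√((1+m)/(1−m))t₀} ∫_{r√(1−m²)}^{2(1+m)t₀} ∫₀^{π/2} 1_{η(θ) ≤ w/((1−m²)r)}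
  r f(r) ln(1 + K h^{1/2}/(w r η(θ)/(1−m²) − r² η(θ)²)) (ln(4(1+m)t₀) − ln w) dθ dw dr`. -/
noncomputable def B (m t₀ K : ℝ) (f : ℝ → ℝ) (h : ℝ) : ENNReal :=
  ∫⁻ r in Ioo (0 : ℝ) (2 * Real.sqrt ((1 + m) / (1 - m)) * t₀),
    ∫⁻ w in Ioo (r * Real.sqrt (1 - m ^ 2)) (2 * (1 + m) * t₀),
      ∫⁻ θ in Ioo (0 : ℝ) (Real.pi / 2),
        ENNReal.ofReal
          (if eta m θ ≤ w / ((1 - m ^ 2) * r) then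
            r * f r *
              Real.log (1 + K * Real.sqrt h /
                (w * r * eta m θ / (1 - m ^ 2) - r ^ 2 * eta m θ ^ 2)) *
              (Real.log (4 * (1 + m) * t₀) - Real.log w)
          else 0)

open Topology ENNReal

theorem Real.log_one_add_le_two_mul_sqrt {x : ℝ} (hx : 0 ≤ x) :
    Real.log (1 + x) ≤ 2 * √x := by
  rw [Real.log_le_iff_le_exp (by linarith)]
  calc 1 + x ≤ (1 + √x) ^ 2 := by nlinarith [Real.sq_sqrt hx, Real.sqrt_nonneg x]
    _ ≤ Real.exp √x ^ 2 := by gcongr; linarith [Real.add_one_le_exp √x]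
    _ = Real.exp (2 * √x) := by rw [← Real.exp_nat_mul]; norm_num

theorem log_one_add_div_le {c η r R K w : ℝ} (hc0 : 0 < c) (hc1 : c ≤ 1) (hη : 1 ≤ η)
    (hr : 0 < r) (hrR : r ≤ R) (hK : 0 ≤ K) (hv : 0 < w - c * r * η) :
    Real.log (1 + K / (w * r * η / c - r ^ 2 * η ^ 2))
      ≤ Real.log (R + K) - Real.log r + 2 * (√(w - c * r * η))⁻¹ := by
  have hη0 : 0 < η := by linarith
  have hRK : 0 < R + K := by linarith
  set v := w - c * r * η
  have hD : w * r * η / c - r ^ 2 * η ^ 2 = r * η * v / c := by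
    simp only [v]; field_simp
  have hrv : r * v ≤ r * η * v / c := by
    rw [le_div_iff₀ hc0]; nlinarith [mul_pos hr hv]
  have hbound : 1 + K / (r * η * v / c) ≤ (R + K) / r * (1 + v⁻¹) := by
    have h1 : K / (r * η * v / c) ≤ K / r * v⁻¹ := by
      calc K / (r * η * v / c) ≤ K / (r * v) := div_le_div_of_nonneg_left hK (by positivity) hrv
        _ = K / r * v⁻¹ := by field_simp
    have h2 : 1 ≤ (R + K) / r := by rw [le_div_iff₀ hr]; linarith
    have h3 : K / r ≤ (R + K) / r := by gcongr; linarith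
    nlinarith [inv_pos.2 hv]
  calc Real.log (1 + K / (w * r * η / c - r ^ 2 * η ^ 2))
      ≤ Real.log ((R + K) / r * (1 + v⁻¹)) := by
        rw [hD]; exact Real.log_le_log (by positivity) hbound
    _ = Real.log (R + K) - Real.log r + Real.log (1 + v⁻¹) := by
        rw [Real.log_mul (div_pos hRK hr).ne' (by positivity), Real.log_div hRK.ne' hr.ne']
    _ ≤ Real.log (R + K) - Real.log r + 2 * (√v)⁻¹ := by
        rw [← Real.sqrt_inv]; gcongr; exact Real.log_one_add_le_two_mul_sqrt (by positivity)

theorem lintegral_Ioo_inv_sqrt_sub {e b : ℝ} (heb : e ≤ b) :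
    ∫⁻ w in Ioo e b, ENNReal.ofReal (√(w - e))⁻¹ = ENNReal.ofReal (2 * √(b - e)) := by
  have hderiv : ∀ w ∈ Ioo e b, HasDerivAt (fun w => 2 * √(w - e)) (√(w - e))⁻¹ w := by
    intro w hw
    have hpos : 0 < w - e := sub_pos.2 hw.1
    refine ((((hasDerivAt_id' w).sub_const e).sqrt hpos.ne').const_mul 2).congr_deriv ?_
    field_simp [(Real.sqrt_pos.2 hpos).ne']
  have hcont : ContinuousOn (fun w => 2 * √(w - e)) (Icc e b) := by fun_prop
  have hint : IntervalIntegrable (fun w => (√(w - e))⁻¹) volume e b :=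
    intervalIntegral.intervalIntegrable_deriv_of_nonneg (hcont.mono (by simp [uIcc_of_le heb]))
      (by simpa [heb] using hderiv) (fun w _ => by positivity)
  rw [← ofReal_integral_eq_lintegral_ofReal (hint.1.mono_set Ioo_subset_Ioc_self)
    (ae_of_all _ fun w => by positivity), ← integral_Ioc_eq_integral_Ioo,
    ← intervalIntegral.integral_of_le heb,
    intervalIntegral.integral_eq_sub_of_hasDerivAt_of_le heb hcont hderiv hint]
  simp

theorem setLIntegral_indicator_inv_sqrt_sub_le (a b : ℝ) {e : ℝ} (he : 0 ≤ e) :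
    ∫⁻ w in Ioo a b, (Ioi e).indicator (fun w => ENNReal.ofReal (√(w - e))⁻¹) w
      ≤ ENNReal.ofReal (2 * √b) := by
  rw [lintegral_indicator measurableSet_Ioi, Measure.restrict_restrict measurableSet_Ioi]
  rcases le_total e b with heb | hbe
  · calc _ ≤ ∫⁻ w in Ioo e b, ENNReal.ofReal (√(w - e))⁻¹ :=
          lintegral_mono_set fun w hw => ⟨hw.1, hw.2.2⟩
      _ = ENNReal.ofReal (2 * √(b - e)) := lintegral_Ioo_inv_sqrt_sub heb
      _ ≤ ENNReal.ofReal (2 * √b) := by gcongr; linarith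
  · have : Ioi e ∩ Ioo a b = ∅ := by
      ext w; simp only [mem_inter_iff, mem_Ioi, mem_Ioo, mem_empty_iff_false, iff_false]
      intro h; linarith [h.1, h.2.2]
    simp [this]

theorem lintegral_lintegral_lintegral_eq_setLIntegral_prod {α β γ : Type*} [MeasurableSpace α]
    [MeasurableSpace β] [MeasurableSpace γ] {μ : Measure α} {ν : Measure β} {ρ : Measure γ}
    [SFinite ν] [SFinite ρ] {F : α × β × γ → ℝ≥0∞} (hF : Measurable F) {s : Set α}
    {t : α → Set β} {u : Set γ} (hs : MeasurableSet s)
    (ht : MeasurableSet {p : α × β | p.2 ∈ t p.1}) (hu : MeasurableSet u) :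
    ∫⁻ x in s, ∫⁻ y in t x, ∫⁻ z in u, F (x, y, z) ∂ρ ∂ν ∂μ =
      ∫⁻ p in {p : α × β × γ | p.1 ∈ s ∧ p.2.1 ∈ t p.1 ∧ p.2.2 ∈ u}, F p ∂μ.prod (ν.prod ρ) := by
  set S := {p : α × β × γ | p.1 ∈ s ∧ p.2.1 ∈ t p.1 ∧ p.2.2 ∈ u}
  have hS : MeasurableSet S :=
    (measurable_fst hs).inter
      ((ht.preimage (measurable_fst.prodMk (measurable_fst.comp measurable_snd))).inter
        ((measurable_snd.comp measurable_snd) hu))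
  rw [← lintegral_indicator hS, lintegral_prod _ (hF.indicator hS).aemeasurable,
    ← lintegral_indicator hs]
  refine lintegral_congr fun x => ?_
  rw [lintegral_prod (fun q => S.indicator F (x, q))
    ((hF.indicator hS).comp measurable_prodMk_left).aemeasurable]
  by_cases hx : x ∈ s
  · have htx : MeasurableSet (t x) := measurable_prodMk_left ht
    rw [indicator_of_mem hx, ← lintegral_indicator htx]
    refine lintegral_congr fun y => ?_
    by_cases hy : y ∈ t x
    · rw [indicator_of_mem hy, ← lintegral_indicator hu]
      refine lintegral_congr fun z => ?_
      by_cases hz : z ∈ u <;> simp [S, indicator, hx, hy, hz]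
    · simp [S, indicator, hx, hy]
  · simp [S, indicator, hx]

theorem integrableOn_Ioo_zero_of_continuousOn {g : ℝ → ℝ} (hg : ContinuousOn g (Ioi 0)) {ρ : ℝ}
    (hρ : 0 < ρ) (h : IntegrableOn g (Ioo 0 ρ)) (R : ℝ) : IntegrableOn g (Ioo 0 R) := by
  have hIcc : IntegrableOn g (Icc ρ R) := (hg.mono fun x hx => hρ.trans_le hx.1).integrableOn_Icc
  refine (h.union hIcc).mono_set fun x hx => ?_
  rcases lt_or_ge x ρ with hxρ | hxρ
  · exact Or.inl ⟨hx.1, hxρ⟩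
  · exact Or.inr ⟨hxρ, hx.2.le⟩

section integrability

variable {f : ℝ → ℝ}

theorem integrableOn_mul_mul_log_of_lintegral_lt_top (hf_cont : ContinuousOn f (Ioi 0))
    (hf0 : ∀ r > 0, 0 ≤ f r)
    (hf_int : (∫⁻ r in Ioo (0 : ℝ) 1, ENNReal.ofReal (r * Real.log (1 / r) * f r)) < ⊤) :
    IntegrableOn (fun r => r * f r * Real.log r) (Ioo 0 1) := by
  have hcont : ContinuousOn (fun r => r * Real.log (1 / r) * f r) (Ioo 0 1) :=
    (continuousOn_id.mul ((continuousOn_const.div continuousOn_id fun r hr => hr.1.ne').log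
      fun r hr => one_div_ne_zero hr.1.ne')).mul (hf_cont.mono Ioo_subset_Ioi_self)
  have hnonneg : ∀ r ∈ Ioo (0 : ℝ) 1, 0 ≤ r * Real.log (1 / r) * f r := fun r hr =>
    mul_nonneg (mul_nonneg hr.1.le (Real.log_nonneg (one_le_one_div hr.1 hr.2.le)))
      (hf0 r hr.1)
  have h := (lintegral_ofReal_ne_top_iff_integrable (hcont.aestronglyMeasurable measurableSet_Ioo)
    (ae_restrict_of_forall_mem measurableSet_Ioo hnonneg)).1 hf_int.ne
  refine IntegrableOn.congr_fun h.neg (fun r _ => ?_) measurableSet_Ioo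
  simp only [Pi.neg_apply, one_div, Real.log_inv]; ring

theorem integrableOn_mul_of_integrableOn_mul_mul_log (hf_cont : ContinuousOn f (Ioi 0))
    (h : IntegrableOn (fun r => r * f r * Real.log r) (Ioo 0 1)) :
    IntegrableOn (fun r => r * f r) (Ioo 0 (Real.exp (-1))) := by
  have hsub : Ioo 0 (Real.exp (-1)) ⊆ Ioo 0 1 :=
    Ioo_subset_Ioo_right (by rw [Real.exp_le_one_iff]; norm_num)
  refine Integrable.mono (h.mono_set hsub)
    ((continuousOn_id.mul (hf_cont.mono Ioo_subset_Ioi_self)).aestronglyMeasurable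
      measurableSet_Ioo)
    (ae_restrict_of_forall_mem measurableSet_Ioo fun r hr => ?_)
  have hlog : Real.log r ≤ -1 := by
    rw [← Real.log_exp (-1)]; exact Real.log_le_log hr.1 hr.2.le
  rw [norm_mul (r * f r)]
  exact le_mul_of_one_le_right (norm_nonneg _)
    (by rw [Real.norm_eq_abs]; linarith [neg_le_abs (Real.log r)])

end integrability

theorem continuous_eta (m : ℝ) : Continuous (eta m) := by
  unfold eta; fun_prop

theorem one_le_eta {m : ℝ} (hc : 0 < 1 - m ^ 2) (θ : ℝ) : 1 ≤ eta m θ := by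
  have hc1 : 1 - m ^ 2 ≤ 1 := by nlinarith
  rw [eta, Real.one_le_sqrt]
  calc (1 : ℝ) = Real.cos θ ^ 2 + Real.sin θ ^ 2 := (Real.cos_sq_add_sin_sq θ).symm
    _ ≤ Real.cos θ ^ 2 / (1 - m ^ 2) ^ 2 + Real.sin θ ^ 2 / (1 - m ^ 2) := by
      gcongr
      · exact le_div_self (sq_nonneg _) (by positivity) (pow_le_one₀ hc.le hc1)
      · exact le_div_self (sq_nonneg _) hc hc1

noncomputable def integrandB (m t₀ K : ℝ) (f : ℝ → ℝ) (h r w θ : ℝ) : ℝ≥0∞ :=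
  ENNReal.ofReal
    (if eta m θ ≤ w / ((1 - m ^ 2) * r) then
      r * f r *
        Real.log (1 + K * Real.sqrt h /
          (w * r * eta m θ / (1 - m ^ 2) - r ^ 2 * eta m θ ^ 2)) *
        (Real.log (4 * (1 + m) * t₀) - Real.log w)
    else 0)

section integrandB

variable {m t₀ K : ℝ} {f : ℝ → ℝ}

theorem Measurable.integrandB {α : Type*} [MeasurableSpace α] {r w θ : α → ℝ}
    (hfr : Measurable fun p => f (r p)) (hr : Measurable r) (hw : Measurable w)
    (hθ : Measurable θ) (h : ℝ) :
    Measurable fun p => integrandB m t₀ K f h (r p) (w p) (θ p) := by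
  have heta := (continuous_eta m).measurable
  exact Measurable.ennreal_ofReal <|
    Measurable.ite (measurableSet_le (by fun_prop) (by fun_prop))
      (((hr.mul hfr).mul (by fun_prop)).mul (by fun_prop)) measurable_const

theorem tendsto_integrandB_nhds_zero (r w θ : ℝ) :
    Tendsto (fun h => integrandB m t₀ K f h r w θ) (𝓝 0) (𝓝 0) := by
  unfold integrandB
  by_cases hP : eta m θ ≤ w / ((1 - m ^ 2) * r)
  · simp only [hP, if_true]
    have hlim : Tendsto
        (fun h => 1 + K * √h / (w * r * eta m θ / (1 - m ^ 2) - r ^ 2 * eta m θ ^ 2))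
        (𝓝 0) (𝓝 1) := by
      simpa using (((Real.continuous_sqrt.tendsto 0).const_mul K).div_const _).const_add 1
    simpa using ENNReal.tendsto_ofReal (((hlim.log one_ne_zero).const_mul (r * f r)).mul_const
      (Real.log (4 * (1 + m) * t₀) - Real.log w))
  · simp [hP]

theorem monotone_integrandB (hc : 0 < 1 - m ^ 2) (hK : 0 ≤ K) {r w : ℝ} (hr : 0 < r)
    (hfr : 0 ≤ f r) (hw : 0 < w) (hwL : w ≤ 4 * (1 + m) * t₀) (θ : ℝ) :
    Monotone fun h => integrandB m t₀ K f h r w θ := by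
  intro h h' hh
  unfold integrandB
  split_ifs with hP
  · have hD : 0 ≤ w * r * eta m θ / (1 - m ^ 2) - r ^ 2 * eta m θ ^ 2 := by
      rw [le_div_iff₀ (by positivity)] at hP
      have : w * r * eta m θ / (1 - m ^ 2) - r ^ 2 * eta m θ ^ 2
          = r * eta m θ * (w - (1 - m ^ 2) * r * eta m θ) / (1 - m ^ 2) := by field_simp
      rw [this]
      have := one_le_eta hc θ
      exact div_nonneg (mul_nonneg (by positivity) (by nlinarith)) hc.le
    have hQ : 0 ≤ Real.log (4 * (1 + m) * t₀) - Real.log w :=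
      sub_nonneg.2 (Real.log_le_log hw hwL)
    apply ENNReal.ofReal_le_ofReal
    gcongr
  · exact le_rfl

theorem integrandB_one_le (hc : 0 < 1 - m ^ 2) (hK : 0 ≤ K) {A R r w : ℝ}
    (hA₁ : Real.log (R + K) ≤ A)
    (hA₂ : Real.log (4 * (1 + m) * t₀) - Real.log √(1 - m ^ 2) ≤ A)
    (hr : 0 < r) (hrR : r ≤ R) (hfr : 0 ≤ f r) (hw : r * √(1 - m ^ 2) < w)
    (hwL : w ≤ 4 * (1 + m) * t₀) (θ : ℝ) :
    integrandB m t₀ K f 1 r w θ ≤ ENNReal.ofReal (r * f r * (A - Real.log r)) *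
      (ENNReal.ofReal (Real.log (4 * (1 + m) * t₀) - Real.log w) +
        2 * (Ioi ((1 - m ^ 2) * r * eta m θ)).indicator
          (fun w => ENNReal.ofReal (√(w - (1 - m ^ 2) * r * eta m θ))⁻¹) w) := by
  have hη := one_le_eta hc θ
  have hw0 : 0 < w := lt_trans (by positivity) hw
  set Q := Real.log (4 * (1 + m) * t₀) - Real.log w
  have hQ0 : 0 ≤ Q := sub_nonneg.2 (Real.log_le_log hw0 hwL)
  have hQA : Q ≤ A - Real.log r := by
    have := Real.log_le_log (by positivity) hw.le
    rw [Real.log_mul hr.ne' (Real.sqrt_pos.2 hc).ne'] at this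
    linarith
  unfold integrandB
  split_ifs with hP
  swap
  · simp
  rw [le_div_iff₀ (by positivity)] at hP
  rw [Real.sqrt_one, mul_one]
  set v := w - (1 - m ^ 2) * r * eta m θ
  rcases (show 0 ≤ v by simp only [v]; nlinarith).eq_or_lt with hv | hv
  · have hD : w * r * eta m θ / (1 - m ^ 2) - r ^ 2 * eta m θ ^ 2
        = r * eta m θ * v / (1 - m ^ 2) := by
      simp only [v]; field_simp
    simp [hD, ← hv]
  have hlog := log_one_add_div_le hc (by nlinarith) hη hr hrR hK hv
  have hs : 0 ≤ (√v)⁻¹ := by positivity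
  have hrf : 0 ≤ r * f r := mul_nonneg hr.le hfr
  have hA : 0 ≤ A - Real.log r := by
    have := Real.log_le_log hr (show r ≤ R + K by linarith); linarith
  rw [indicator_of_mem (show w ∈ Ioi ((1 - m ^ 2) * r * eta m θ) by simp only [mem_Ioi]; linarith),
    ← ENNReal.ofReal_ofNat 2, ← ENNReal.ofReal_mul zero_le_two,
    ← ENNReal.ofReal_add hQ0 (by positivity), ← ENNReal.ofReal_mul (mul_nonneg hrf hA)]
  apply ENNReal.ofReal_le_ofReal
  calc r * f r * Real.log (1 + K / (w * r * eta m θ / (1 - m ^ 2) - r ^ 2 * eta m θ ^ 2)) * Q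
      ≤ r * f r * (A - Real.log r + 2 * (√v)⁻¹) * Q := by gcongr; linarith
    _ ≤ r * f r * (A - Real.log r) * (Q + 2 * (√v)⁻¹) := by
      nlinarith [mul_le_mul_of_nonneg_left hQA (mul_nonneg hrf hs)]

theorem setLIntegral_integrandB_one_le (hc : 0 < 1 - m ^ 2) (hK : 0 ≤ K) {A R r : ℝ}
    (hA₁ : Real.log (R + K) ≤ A)
    (hA₂ : Real.log (4 * (1 + m) * t₀) - Real.log √(1 - m ^ 2) ≤ A)
    (hr : 0 < r) (hrR : r ≤ R) (hfr : 0 ≤ f r) (θ : ℝ) :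
    ∫⁻ w in Ioo (r * √(1 - m ^ 2)) (2 * (1 + m) * t₀), integrandB m t₀ K f 1 r w θ ≤
      ENNReal.ofReal (r * f r * (A - Real.log r)) *
        ((∫⁻ w in Ioo 0 (2 * (1 + m) * t₀),
            ENNReal.ofReal (Real.log (4 * (1 + m) * t₀) - Real.log w)) +
          2 * ENNReal.ofReal (2 * √(2 * (1 + m) * t₀))) := by
  set W := 2 * (1 + m) * t₀
  set L := Real.log (4 * (1 + m) * t₀)
  set e := (1 - m ^ 2) * r * eta m θ
  have he : 0 ≤ e := mul_nonneg (mul_nonneg hc.le hr.le) (zero_le_one.trans (one_le_eta hc θ))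
  have hI : Ioo (r * √(1 - m ^ 2)) W ⊆ Ioo 0 W := Ioo_subset_Ioo_left (by positivity)
  calc _ ≤ ∫⁻ w in Ioo (r * √(1 - m ^ 2)) W, ENNReal.ofReal (r * f r * (A - Real.log r)) *
        (ENNReal.ofReal (L - Real.log w) +
          2 * (Ioi e).indicator (fun w => ENNReal.ofReal (√(w - e))⁻¹) w) :=
        setLIntegral_mono' measurableSet_Ioo fun w hw =>
          integrandB_one_le hc hK hA₁ hA₂ hr hrR hfr hw.1 (by linarith [hw.2, (hI hw).1]) θ
    _ = ENNReal.ofReal (r * f r * (A - Real.log r)) *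
        ((∫⁻ w in Ioo (r * √(1 - m ^ 2)) W, ENNReal.ofReal (L - Real.log w)) +
          2 * ∫⁻ w in Ioo (r * √(1 - m ^ 2)) W,
            (Ioi e).indicator (fun w => ENNReal.ofReal (√(w - e))⁻¹) w) := by
        rw [lintegral_const_mul' _ _ ofReal_ne_top, lintegral_add_left (by fun_prop),
          lintegral_const_mul' _ _ ofNat_ne_top]
    _ ≤ _ := by
        gcongr
        exact setLIntegral_indicator_inv_sqrt_sub_le _ _ he

theorem B_one_lt_top (hc : 0 < 1 - m ^ 2) (hK : 0 ≤ K) (hf0 : ∀ r > 0, 0 ≤ f r)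
    (hf₁ : IntegrableOn (fun r => r * f r) (Ioo 0 (2 * Real.sqrt ((1 + m) / (1 - m)) * t₀)))
    (hf₂ : IntegrableOn (fun r => r * f r * Real.log r)
      (Ioo 0 (2 * Real.sqrt ((1 + m) / (1 - m)) * t₀))) :
    B m t₀ K f 1 < ∞ := by
  set R := 2 * Real.sqrt ((1 + m) / (1 - m)) * t₀
  set W := 2 * (1 + m) * t₀
  set L := Real.log (4 * (1 + m) * t₀)
  set A := max (Real.log (R + K)) (L - Real.log √(1 - m ^ 2))
  set E := ∫⁻ w in Ioo 0 W, ENNReal.ofReal (L - Real.log w)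
  have hE : E < ∞ :=
    (((integrableOn_const measure_Ioo_lt_top.ne).sub
      (intervalIntegral.intervalIntegrable_log'.1.mono_set Ioo_subset_Ioc_self))).lintegral_lt_top
  set C := ENNReal.ofReal (Real.pi / 2) * (E + 2 * ENNReal.ofReal (2 * √W))
  have hinner : ∀ r ∈ Ioo 0 R, ∫⁻ w in Ioo (r * √(1 - m ^ 2)) W, ∫⁻ θ in Ioo 0 (Real.pi / 2),
      integrandB m t₀ K f 1 r w θ ≤ ENNReal.ofReal (r * f r * (A - Real.log r)) * C := by
    intro r hr
    have hmeas : Measurable (Function.uncurry fun w θ => integrandB m t₀ K f 1 r w θ) :=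
      Measurable.integrandB measurable_const measurable_const measurable_fst measurable_snd 1
    -- integrate in `w` first: the singularity of the bound, `w = (1 - m²) r η(θ)`, moves with `θ`
    rw [lintegral_lintegral_swap hmeas.aemeasurable]
    calc _ ≤ ∫⁻ θ in Ioo 0 (Real.pi / 2),
          ENNReal.ofReal (r * f r * (A - Real.log r)) * (E + 2 * ENNReal.ofReal (2 * √W)) :=
          lintegral_mono fun θ => setLIntegral_integrandB_one_le hc hK (le_max_left _ _)
            (le_max_right _ _) hr.1 hr.2.le (hf0 r hr.1) θ
      _ = ENNReal.ofReal (r * f r * (A - Real.log r)) * C := by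
        rw [setLIntegral_const, Real.volume_Ioo, sub_zero]; ring
  have hA : IntegrableOn (fun r => r * f r * (A - Real.log r)) (Ioo 0 R) :=
    IntegrableOn.congr_fun (f := fun r => A * (r * f r) - r * f r * Real.log r)
      ((hf₁.const_mul A).sub hf₂) (fun r _ => by ring) measurableSet_Ioo
  calc B m t₀ K f 1 ≤ ∫⁻ r in Ioo 0 R, ENNReal.ofReal (r * f r * (A - Real.log r)) * C :=
        setLIntegral_mono' measurableSet_Ioo hinner
    _ = (∫⁻ r in Ioo 0 R, ENNReal.ofReal (r * f r * (A - Real.log r))) * C :=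
        lintegral_mul_const' _ _ (by finiteness)
    _ < ∞ := mul_lt_top hA.lintegral_lt_top (by finiteness)

theorem tendsto_B_nhdsGT_zero (hc : 0 < 1 - m ^ 2) (hK : 0 ≤ K) (hf : Measurable f)
    (hf0 : ∀ r > 0, 0 ≤ f r) (hB : B m t₀ K f 1 < ∞) :
    Tendsto (B m t₀ K f) (𝓝[>] 0) (𝓝 0) := by
  set S := {p : ℝ × ℝ × ℝ | p.1 ∈ Ioo 0 (2 * Real.sqrt ((1 + m) / (1 - m)) * t₀) ∧
    p.2.1 ∈ Ioo (p.1 * √(1 - m ^ 2)) (2 * (1 + m) * t₀) ∧ p.2.2 ∈ Ioo 0 (Real.pi / 2)}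
  have hS : MeasurableSet S := by measurability
  have hmeas : ∀ h, Measurable fun p : ℝ × ℝ × ℝ => integrandB m t₀ K f h p.1 p.2.1 p.2.2 :=
    Measurable.integrandB (hf.comp measurable_fst) measurable_fst
      (measurable_fst.comp measurable_snd) (measurable_snd.comp measurable_snd)
  have hB_eq : B m t₀ K f = fun h => ∫⁻ p in S, integrandB m t₀ K f h p.1 p.2.1 p.2.2 :=
    funext fun h => lintegral_lintegral_lintegral_eq_setLIntegral_prod (hmeas h)
      measurableSet_Ioo (by measurability) measurableSet_Ioo
  rw [hB_eq] at hB ⊢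
  have hbound : ∀ᶠ h in 𝓝[>] 0, ∀ᵐ p ∂volume.restrict S,
      integrandB m t₀ K f h p.1 p.2.1 p.2.2 ≤ integrandB m t₀ K f 1 p.1 p.2.1 p.2.2 := by
    filter_upwards [Ioc_mem_nhdsGT one_pos] with h hh
    refine ae_restrict_of_forall_mem hS fun p hp => ?_
    have hw0 : 0 < p.2.1 := lt_trans (by have := hp.1.1; positivity) hp.2.1.1
    exact monotone_integrandB hc hK hp.1.1 (hf0 _ hp.1.1) hw0 (by linarith [hp.2.1.2]) _ hh.2
  simpa using tendsto_lintegral_filter_of_dominated_convergence _ (Eventually.of_forall hmeas)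
    hbound hB.ne
    (ae_of_all _ fun p => (tendsto_integrandB_nhds_zero _ _ _).mono_left nhdsWithin_le_nhds)

end integrandB

theorem stmt_18_general (m t₀ K : ℝ) (hm0 : 0 ≤ m) (hm1 : m < 1) (hK : 0 < K)
    (f : ℝ → ℝ) (hf_cont : ContinuousOn f (Ioi 0)) (hf_pos : ∀ r > (0 : ℝ), 0 < f r)
    (hf_int : (∫⁻ r in Ioo (0 : ℝ) 1, ENNReal.ofReal (r * Real.log (1 / r) * f r)) < ⊤) :
    Tendsto (B m t₀ K f) (nhdsWithin 0 (Ioi 0)) (nhds 0) := by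
  have hc : 0 < 1 - m ^ 2 := by nlinarith
  have hf0 : ∀ r > 0, 0 ≤ f r := fun r hr => (hf_pos r hr).le
  have hlog := integrableOn_mul_mul_log_of_lintegral_lt_top hf_cont hf0 hf_int
  have hB : B m t₀ K f 1 < ∞ := B_one_lt_top hc hK.le hf0
    (integrableOn_Ioo_zero_of_continuousOn (continuousOn_id.mul hf_cont) (Real.exp_pos _)
      (integrableOn_mul_of_integrableOn_mul_mul_log hf_cont hlog) _)
    (integrableOn_Ioo_zero_of_continuousOn
      ((continuousOn_id.mul hf_cont).mul (Real.continuousOn_log.mono fun r hr => ne_of_gt hr))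
      one_pos hlog _)
  -- dominated convergence needs a measurable integrand; `f` is only continuous on `(0, ∞)`
  set g := (Ioi (0 : ℝ)).piecewise f 0
  have hgf : ∀ r > 0, g r = f r := fun r hr => piecewise_eq_of_mem _ _ _ hr
  have hBg : B m t₀ K f = B m t₀ K g :=
    funext fun h => setLIntegral_congr_fun measurableSet_Ioo fun r hr => by rw [hgf r hr.1]
  rw [hBg] at hB ⊢
  exact tendsto_B_nhdsGT_zero hc hK.le
    (hf_cont.measurable_piecewise continuousOn_const measurableSet_Ioi)
    (fun r hr => hgf r hr ▸ hf0 r hr) hB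

/-- Remark 2 of the paper: Let `0 ≤ m < 1`, `t₀ > 0` and `K > 0` be fixed,
and let `f : (0,∞) → (0,∞)` be continuous with `∫₀¹ r ln(1/r) f(r) dr < ∞`. Then
`B(h) → 0` as `h → 0⁺`. -/
theorem stmt_18 (m t₀ K : ℝ) (hm0 : 0 ≤ m) (hm1 : m < 1) (ht₀ : 0 < t₀) (hK : 0 < K)
    (f : ℝ → ℝ) (hf_cont : ContinuousOn f (Ioi 0)) (hf_pos : ∀ r > (0 : ℝ), 0 < f r)
    (hf_int : (∫⁻ r in Ioo (0 : ℝ) 1, ENNReal.ofReal (r * Real.log (1 / r) * f r)) < ⊤) :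
    Tendsto (B m t₀ K f) (nhdsWithin 0 (Ioi 0)) (nhds 0) :=
  stmt_18_general m t₀ K hm0 hm1 hK f hf_cont hf_pos hf_int
end
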